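/- Let G be a finite nonempty semigroup whose cardinality is not 2. Then every partition of G is a Schur ring over G if and only if G is left-null or right-null, i.e., either x*y = x for all x, y ∈ G, or x*y = y for all x, y ∈ G. -/

import Mathlib

open scoped Pointwise

/-- The simple quantity `[X] = ∑_{x ∈ X} x` in the semigroup algebra `MonoidAlgebra ℚ G`. -/
noncomputable def simpleQty {G : Type*} [Mul G] (X : Finset G) : MonoidAlgebra ℚ G :=
  ∑ x ∈ X, MonoidAlgebra.single x (1 : ℚ)

/-- A partition of `G` into nonempty finite blocks. -/
def IsPartition {G : Type*} (S : Set (Set G)) : Prop :=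
  (∀ X ∈ S, X.Nonempty ∧ X.Finite) ∧ ∀ x : G, ∃! X, X ∈ S ∧ x ∈ X

/-- The ℚ-linear span of the simple quantities of the blocks of `S`. -/
noncomputable def schurSpan {G : Type*} [Mul G] (S : Set (Set G)) :
    Submodule ℚ (MonoidAlgebra ℚ G) :=
  Submodule.span ℚ { z | ∃ X ∈ S, ∃ hX : X.Finite, z = simpleQty hX.toFinset }

/-- A Schur ring over the semigroup `G`. -/
def IsSchurRing {G : Type*} [Semigroup G] (S : Set (Set G)) : Prop :=
  IsPartition S ∧ ∀ X ∈ S, ∀ Y ∈ S, ∀ (hX : X.Finite) (hY : Y.Finite),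
    simpleQty hX.toFinset * simpleQty hY.toFinset ∈ schurSpan S

/-- `A` is an `S`-subset: a union of blocks of `S`. -/
def IsSUnion {G : Type*} (S : Set (Set G)) (A : Set G) : Prop :=
  ∀ X ∈ S, X ⊆ A ∨ X ∩ A = ∅

section Aux

variable {G : Type*}

lemma simpleQty_apply [Mul G] [DecidableEq G] (F : Finset G) (a : G) :
    (simpleQty F).coeff a = if a ∈ F then (1:ℚ) else 0 := by
  unfold simpleQty
  rw [MonoidAlgebra.coeff_sum, Finset.sum_apply']
  simp [MonoidAlgebra.single_apply, Finsupp.single_apply, Finset.sum_ite_eq']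

lemma mul_single_apply [Mul G] [DecidableEq G] (F : Finset G) (c g : G) :
    (simpleQty F * MonoidAlgebra.single c (1:ℚ)).coeff g = ((F.filter fun x => x * c = g).card : ℚ) := by
  unfold simpleQty
  rw [Finset.sum_mul]
  simp only [MonoidAlgebra.single_mul_single, one_mul]
  rw [MonoidAlgebra.coeff_sum, Finset.sum_apply']
  simp [MonoidAlgebra.single_apply, Finsupp.single_apply, Finset.sum_boole]

lemma single_mul_apply [Mul G] [DecidableEq G] (F : Finset G) (c g : G) :
    (MonoidAlgebra.single c (1:ℚ) * simpleQty F).coeff g = ((F.filter fun x => c * x = g).card : ℚ) := by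
  unfold simpleQty
  rw [Finset.mul_sum]
  simp only [MonoidAlgebra.single_mul_single, one_mul]
  rw [MonoidAlgebra.coeff_sum, Finset.sum_apply']
  simp [MonoidAlgebra.single_apply, Finsupp.single_apply, Finset.sum_boole]

/-- Any element of the Schur span has constant coefficients on each block. -/
lemma span_coeff [Mul G] [DecidableEq G] {S : Set (Set G)} (hS : IsPartition S)
    {X : Set G} (hX : X ∈ S) {a b : G} (ha : a ∈ X) (hb : b ∈ X)
    {z : MonoidAlgebra ℚ G} (hz : z ∈ schurSpan S) : z.coeff a = z.coeff b := by
  induction hz using Submodule.span_induction with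
  | mem w hw =>
      obtain ⟨C, hC, hCfin, rfl⟩ := hw
      have key : a ∈ C ↔ b ∈ C := by
        constructor
        · intro haC
          have hCX : C = X := (hS.2 a).unique ⟨hC, haC⟩ ⟨hX, ha⟩
          rw [hCX]; exact hb
        · intro hbC
          have hCX : C = X := (hS.2 b).unique ⟨hC, hbC⟩ ⟨hX, hb⟩
          rw [hCX]; exact ha
      rw [simpleQty_apply, simpleQty_apply]
      exact if_congr (by simp only [Set.Finite.mem_toFinset]; exact key) rfl rfl
  | zero => simp
  | add u v _ _ hu hv =>
      show (u + v).coeff a = (u + v).coeff b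
      rw [MonoidAlgebra.coeff_add, Finsupp.add_apply, Finsupp.add_apply, hu, hv]
  | smul r u _ hu =>
      show (r • u).coeff a = (r • u).coeff b
      rw [MonoidAlgebra.coeff_smul_apply, MonoidAlgebra.coeff_smul_apply, hu]

/-- The key dichotomy: an idempotent-like map with constant fiber sizes off `c`
is constantly `c` or the identity. -/
lemma fiber_dichotomy [Fintype G] [DecidableEq G] (c : G) (f : G → G)
    (hfc : f c = c) (hff : ∀ x, f (f x) = f x) (hcard : 3 ≤ Fintype.card G)
    (hconst : ∀ a b : G, a ≠ c → b ≠ c →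
      ((Finset.univ.erase c).filter fun x => f x = a).card
        = ((Finset.univ.erase c).filter fun x => f x = b).card) :
    (∀ x, f x = c) ∨ (∀ x, f x = x) := by
  set T := Finset.univ.erase c with hT
  have hTcard : T.card = Fintype.card G - 1 := by
    simp [hT, Finset.card_erase_of_mem]
  have hnontriv : Nontrivial G := Fintype.one_lt_card_iff_nontrivial.mp (by omega)
  obtain ⟨a₀, ha₀⟩ := exists_ne c
  set N : G → ℕ := fun g => (T.filter fun x => f x = g).card with hN
  have hsum : T.card = ∑ g ∈ Finset.univ, N g :=
    Finset.card_eq_sum_card_fiberwise (fun x _ => Finset.mem_univ _)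
  have hsplit : ∑ g ∈ Finset.univ, N g = N c + ∑ g ∈ T, N g := by
    rw [hT, ← Finset.sum_erase_add _ _ (Finset.mem_univ c), add_comm]
  have hTconst : ∑ g ∈ T, N g = T.card * N a₀ := by
    rw [Finset.sum_congr rfl (fun g hg => hconst g a₀ (Finset.ne_of_mem_erase hg) ha₀),
      Finset.sum_const, smul_eq_mul]
  by_cases hk : N a₀ = 0
  · left
    intro x
    by_cases hx : x = c
    · rw [hx, hfc]
    · by_contra hne
      have h1 : x ∈ T.filter fun y => f y = f x := by
        simp [hT, hx]
      have h2 : N (f x) = 0 := by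
        show (T.filter fun y => f y = f x).card = 0
        rw [hconst (f x) a₀ hne ha₀]; exact hk
      have h3 : 0 < N (f x) := Finset.card_pos.mpr ⟨x, h1⟩
      omega
  · -- N a₀ ≥ 1; conclude f = id
    have hNc : N c = 0 ∧ T.card = T.card * N a₀ := by
      have h2 : T.card * 1 ≤ T.card * N a₀ :=
        Nat.mul_le_mul_left _ (Nat.one_le_iff_ne_zero.mpr hk)
      rw [mul_one] at h2
      omega
    have hk1 : N a₀ = 1 := by
      have hTpos : 0 < T.card := by omega
      exact (Nat.eq_of_mul_eq_mul_left hTpos (by rw [mul_one, ← hNc.2])).symm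
    right
    intro x
    by_cases hx : x = c
    · rw [hx, hfc]
    · have hfxc : f x ≠ c := by
        intro h
        have h1 : x ∈ T.filter fun y => f y = c := by simp [hT, hx, h]
        have h3 : 0 < N c := Finset.card_pos.mpr ⟨x, h1⟩
        omega
      by_contra hne
      have hsub : ({x, f x} : Finset G) ⊆ T.filter fun y => f y = f x := by
        intro z hz
        simp only [Finset.mem_insert, Finset.mem_singleton] at hz
        rcases hz with rfl | rfl
        · simp [hT, hx]
        · simp [hT, hfxc, hff]
      have h2 : 2 ≤ N (f x) := by
        have hcle := Finset.card_le_card hsub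
        rwa [Finset.card_pair (fun h => hne h.symm)] at hcle
      have h3 : N (f x) = 1 := by
        show (T.filter fun y => f y = f x).card = 1
        rw [hconst (f x) a₀ hfxc ha₀]; exact hk1
      omega

lemma simpleQty_mul_eq_left [Mul G] (hl : ∀ x y : G, x * y = x) (F1 F2 : Finset G) :
    simpleQty F1 * simpleQty F2 = F2.card • simpleQty F1 := by
  unfold simpleQty
  rw [Finset.sum_mul_sum, Finset.smul_sum]
  refine Finset.sum_congr rfl fun x _ => ?_
  simp [MonoidAlgebra.single_mul_single, hl, Finset.sum_const]

lemma simpleQty_mul_eq_right [Mul G] (hr : ∀ x y : G, x * y = y) (F1 F2 : Finset G) :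
    simpleQty F1 * simpleQty F2 = F1.card • simpleQty F2 := by
  unfold simpleQty
  rw [Finset.sum_mul_sum, Finset.smul_sum, Finset.sum_comm]
  refine Finset.sum_congr rfl fun y _ => ?_
  simp [MonoidAlgebra.single_mul_single, hr, Finset.sum_const]

end Aux

/-- a finite nonempty semigroup of order `≠ 2` has the property that every
partition is a Schur ring iff it is left-null or right-null. -/
theorem every_partition_schur_iff_leftNull_or_rightNull {G : Type*} [Semigroup G]
    [Fintype G] [Nonempty G] (h2 : Fintype.card G ≠ 2) :
    (∀ S : Set (Set G), IsPartition S → IsSchurRing S) ↔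
      ((∀ x y : G, x * y = x) ∨ (∀ x y : G, x * y = y)) := by
  classical
  constructor
  · intro h
    rcases eq_or_ne (Fintype.card G) 1 with h1 | h1
    · left
      have hsub : Subsingleton G := Fintype.card_le_one_iff_subsingleton.mp h1.le
      intro x y; exact Subsingleton.elim _ _
    have h3 : 3 ≤ Fintype.card G := by
      have : 1 ≤ Fintype.card G := Fintype.card_pos
      omega
    have hnt : Nontrivial G := Fintype.one_lt_card_iff_nontrivial.mp (by omega)
    -- the partition {{c}, {c}ᶜ}
    have hpart : ∀ c : G, IsPartition ({({c} : Set G), ({c}ᶜ : Set G)} : Set (Set G)) := by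
      intro c
      constructor
      · intro X hXmem
        simp only [Set.mem_insert_iff, Set.mem_singleton_iff] at hXmem
        rcases hXmem with rfl | rfl
        · exact ⟨⟨c, rfl⟩, Set.finite_singleton c⟩
        · obtain ⟨b, hb⟩ := exists_ne c
          exact ⟨⟨b, hb⟩, Set.toFinite _⟩
      · intro x
        by_cases hx : x = c
        · refine ⟨{c}, ⟨Or.inl rfl, by simp [hx]⟩, ?_⟩
          rintro Y ⟨hY, hxY⟩
          simp only [Set.mem_insert_iff, Set.mem_singleton_iff] at hY
          rcases hY with rfl | rfl
          · rfl
          · exact absurd hxY (by simp [hx])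
        · refine ⟨{c}ᶜ, ⟨Or.inr rfl, hx⟩, ?_⟩
          rintro Y ⟨hY, hxY⟩
          simp only [Set.mem_insert_iff, Set.mem_singleton_iff] at hY
          rcases hY with rfl | rfl
          · exact absurd hxY (by simp [hx])
          · rfl
    have hmem1 : ∀ c : G, ({c} : Set G) ∈ ({({c} : Set G), ({c}ᶜ : Set G)} : Set (Set G)) :=
      fun c => Or.inl rfl
    have hmem2 : ∀ c : G, ({c}ᶜ : Set G) ∈ ({({c} : Set G), ({c}ᶜ : Set G)} : Set (Set G)) :=
      fun c => Or.inr rfl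
    have hts : ∀ c : G, (Set.finite_singleton c).toFinset = ({c} : Finset G) := by
      intro c; ext x
      simp only [Set.Finite.mem_toFinset, Finset.mem_singleton]
      exact Iff.rfl
    have htc : ∀ (c : G) (hf : Set.Finite ({c}ᶜ : Set G)),
        hf.toFinset = Finset.univ.erase c := by
      intro c hf; ext x; simp [Set.Finite.mem_toFinset]
    -- idempotency
    have hidem : ∀ c : G, c * c = c := by
      intro c
      by_contra hne
      obtain ⟨b, hb1, hb2⟩ : ∃ b : G, b ≠ c ∧ b ≠ c * c := by
        by_contra h'
        push_neg at h'
        have hsubu : (Finset.univ : Finset G) ⊆ {c, c * c} := by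
          intro b _
          rcases eq_or_ne b c with rfl | hbc
          · simp
          · simp [h' b hbc]
        have hc1 := Finset.card_le_card hsubu
        have hc2 := Finset.card_insert_le c ({c * c} : Finset G)
        rw [Finset.card_singleton] at hc2
        rw [Finset.card_univ] at hc1
        omega
      have hs := (h _ (hpart c)).2 {c} (hmem1 c) {c} (hmem1 c)
        (Set.finite_singleton c) (Set.finite_singleton c)
      rw [hts c] at hs
      have hz : (MonoidAlgebra.single c (1:ℚ)) * MonoidAlgebra.single c (1:ℚ)
          ∈ schurSpan ({({c} : Set G), ({c}ᶜ : Set G)} : Set (Set G)) := by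
        have e : simpleQty ({c} : Finset G) = MonoidAlgebra.single c (1:ℚ) := by
          unfold simpleQty; rw [Finset.sum_singleton]
        rwa [e] at hs
      have hcoef := span_coeff (hpart c) (hmem2 c)
        (show c * c ∈ ({c}ᶜ : Set G) from hne) (show b ∈ ({c}ᶜ : Set G) from hb1) hz
      rw [MonoidAlgebra.single_mul_single, one_mul] at hcoef
      simp only [MonoidAlgebra.single_apply, if_pos rfl,
        if_neg (fun hh => hb2 hh.symm : ¬ c * c = b)] at hcoef
      exact one_ne_zero hcoef
    -- dichotomy for right translations
    have hRho : ∀ c : G, (∀ x, x * c = c) ∨ (∀ x, x * c = x) := by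
      intro c
      have hs := (h _ (hpart c)).2 {c}ᶜ (hmem2 c) {c} (hmem1 c)
        (Set.toFinite _) (Set.finite_singleton c)
      rw [hts c, htc c] at hs
      have e : simpleQty ({c} : Finset G) = MonoidAlgebra.single c (1:ℚ) := by
        unfold simpleQty; rw [Finset.sum_singleton]
      rw [e] at hs
      refine fiber_dichotomy c (fun x => x * c) (hidem c)
        (fun x => by show x * c * c = x * c; rw [mul_assoc, hidem c]) h3 ?_
      intro a b hac hbc
      have hcoef := span_coeff (hpart c) (hmem2 c)
        (show a ∈ ({c}ᶜ : Set G) from hac) (show b ∈ ({c}ᶜ : Set G) from hbc) hs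
      rw [mul_single_apply, mul_single_apply] at hcoef
      exact_mod_cast hcoef
    -- dichotomy for left translations
    have hLam : ∀ c : G, (∀ x, c * x = c) ∨ (∀ x, c * x = x) := by
      intro c
      have hs := (h _ (hpart c)).2 {c} (hmem1 c) {c}ᶜ (hmem2 c)
        (Set.finite_singleton c) (Set.toFinite _)
      rw [hts c, htc c] at hs
      have e : simpleQty ({c} : Finset G) = MonoidAlgebra.single c (1:ℚ) := by
        unfold simpleQty; rw [Finset.sum_singleton]
      rw [e] at hs
      refine fiber_dichotomy c (fun x => c * x) (hidem c)
        (fun x => by show c * (c * x) = c * x; rw [← mul_assoc, hidem c]) h3 ?_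
      intro a b hac hbc
      have hcoef := span_coeff (hpart c) (hmem2 c)
        (show a ∈ ({c}ᶜ : Set G) from hac) (show b ∈ ({c}ᶜ : Set G) from hbc) hs
      rw [single_mul_apply, single_mul_apply] at hcoef
      exact_mod_cast hcoef
    -- combine
    by_contra hcon
    push_neg at hcon
    obtain ⟨⟨u, v, huv⟩, ⟨p, q, hpq⟩⟩ := hcon
    have hv : ∀ x, x * v = v := (hRho v).resolve_right (fun hr => huv (hr u))
    have hp : ∀ x, p * x = p := (hLam p).resolve_right (fun hr => hpq (hr q))
    have hpv : p = v := by
      have h1 := hv p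
      have hh2 := hp v
      rw [hh2] at h1
      exact h1
    rw [hpv] at hp
    have hex : ∃ a b : G, a ≠ b ∧ a ≠ v ∧ b ≠ v := by
      obtain ⟨x, y, zz, hxy, hxz, hyz⟩ :=
        Fintype.two_lt_card_iff.mp (show 2 < Fintype.card G by omega)
      rcases eq_or_ne x v with rfl | hx
      · exact ⟨y, zz, hyz, Ne.symm hxy, Ne.symm hxz⟩
      · rcases eq_or_ne y v with rfl | hy
        · exact ⟨x, zz, hxz, hx, Ne.symm hyz⟩
        · exact ⟨x, y, hxy, hx, hy⟩
    obtain ⟨a, b, hab, hav, hbv⟩ := hex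
    have hRa : ∀ w, w * a = w :=
      (hRho a).resolve_left (fun hl => hav ((hl v).symm.trans (hp a)))
    have hLa : ∀ w, a * w = w :=
      (hLam a).resolve_left (fun hl => hav ((hl v).symm.trans (hv a)))
    have hRb : ∀ w, w * b = w :=
      (hRho b).resolve_left (fun hl => hbv ((hl v).symm.trans (hp b)))
    exact hab ((hRb a).symm.trans (hLa b))
  · intro hnull S hS
    refine ⟨hS, ?_⟩
    intro X hX Y hY hXf hYf
    rcases hnull with hl | hr
    · rw [simpleQty_mul_eq_left hl]
      have hmem : simpleQty hXf.toFinset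
          ∈ { z : MonoidAlgebra ℚ G | ∃ X ∈ S, ∃ hX : X.Finite, z = simpleQty hX.toFinset } :=
        ⟨X, hX, hXf, rfl⟩
      exact nsmul_mem (Submodule.subset_span hmem) _
    · rw [simpleQty_mul_eq_right hr]
      have hmem : simpleQty hYf.toFinset
          ∈ { z : MonoidAlgebra ℚ G | ∃ X ∈ S, ∃ hX : X.Finite, z = simpleQty hX.toFinset } :=
        ⟨Y, hY, hYf, rfl⟩
      exact nsmul_mem (Submodule.subset_span hmem) _
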